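/- For the binary symmetric wiretap channel where Bob's channel is a BSC with flip probability p_B and Eve's is an independent BSC with flip probability p_E, the root fidelity of the phase channel to Bob equals |p_E − 1/2|. -/
import Mathlib


open Real

/-- For the binary symmetric wiretap channel (Bob: BSC with flip probability
`p_B`, Eve: independent BSC with flip probability `p_E`), the root fidelity of
the phase channel to Bob equals `|p_E − 1/2|`.  The output states are block
diagonal in `z` with pure blocks `|χ_{z,x}⟩`, so the root fidelity is
`∑_z (1/2) |⟨χ_{z,0}|χ_{z,1}⟩|`, where
`|χ_{z,x}⟩ = (1/√2) ∑_{x',y} (−1)^{x·x'} √(p(y|x') p(x'|z)) |y⟩|x'⟩|x'⟩|y⟩`. -/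
theorem bsc_wiretap_phase_root_fidelity (pB pE : ℝ)
    (hpB : pB ∈ Set.Icc (0 : ℝ) 1) (hpE : pE ∈ Set.Icc (0 : ℝ) 1)
    (pYgX pXgZ : Bool → Bool → ℝ)
    (hY : ∀ y x', pYgX y x' =
      pB ^ (cond (xor x' y) 1 0 : ℕ) * (1 - pB) ^ (cond (xor x' y) 0 1 : ℕ))
    (hX : ∀ x' z, pXgZ x' z =
      pE ^ (cond (xor x' z) 1 0 : ℕ) * (1 - pE) ^ (cond (xor x' z) 0 1 : ℕ))
    (χ : Bool → Bool → (Bool × Bool × Bool × Bool) → ℝ)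
    (hχ : ∀ z x i, χ z x i =
      if i.2.1 = i.2.2.1 ∧ i.1 = i.2.2.2 then
        (1 / Real.sqrt 2) * (if x && i.2.1 then -1 else 1) *
          Real.sqrt (pYgX i.1 i.2.1 * pXgZ i.2.1 z)
      else 0) :
    ∑ z : Bool, (1 / 2) * |∑ i : Bool × Bool × Bool × Bool, χ z false i * χ z true i| =
      |pE - 1 / 2| := by
  obtain ⟨hB0, hB1⟩ := hpB
  obtain ⟨hE0, hE1⟩ := hpE
  have h2 : Real.sqrt 2 ≠ 0 := by positivity
  have key : ∀ y x' z : Bool, Real.sqrt (pYgX y x' * pXgZ x' z) * Real.sqrt (pYgX y x' * pXgZ x' z) = pYgX y x' * pXgZ x' z := by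
    intro y x' z
    apply Real.mul_self_sqrt
    have h1 : 0 ≤ pYgX y x' := by
      rw [hY]; exact mul_nonneg (pow_nonneg hB0 _) (pow_nonneg (by linarith) _)
    have h2 : 0 ≤ pXgZ x' z := by
      rw [hX]; exact mul_nonneg (pow_nonneg hE0 _) (pow_nonneg (by linarith) _)
    exact mul_nonneg h1 h2
  simp only [Fintype.sum_bool, Fintype.sum_prod_type, hχ]
  simp only [Bool.and_self, Bool.true_and, Bool.false_and]
  norm_num
  have e : ∀ y x' z : Bool, (√2)⁻¹ * √(pYgX y x' * pXgZ x' z) * ((√2)⁻¹ * √(pYgX y x' * pXgZ x' z)) = pYgX y x' * pXgZ x' z / 2 := by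
    intro y x' z
    have := key y x' z
    have h22 : (√2) * (√2) = 2 := Real.mul_self_sqrt (by norm_num)
    field_simp
    nlinarith [this, h22]
  simp only [e]
  simp only [hY, hX]
  norm_num
  have a1 : -((1 - pB) * (1 - pE) / 2) + pB * pE / 2 + (-(pB * (1 - pE) / 2) + (1 - pB) * pE / 2) = pE - 1/2 := by ring
  have a2 : -((1 - pB) * pE / 2) + pB * (1 - pE) / 2 + (-(pB * pE / 2) + (1 - pB) * (1 - pE) / 2) = -(pE - 1/2) := by ring
  rw [a1, a2, abs_neg]
  ring
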